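/- For the (-1,1)-continued fraction algorithm applied to an irrational number x, the nonzero partial quotients alternate in sign: for all j ≥ 1, a_j and a_{j+1} have opposite signs. -/

import Mathlib

/-!
After the first step every `x_j` satisfies `|x_j| > 1`: the remainder `r_j = x_j - a_j` lies in
`[-1, 1)`, is irrational, hence lies in `(-1, 0) ∪ (0, 1)`, and `|x_{j+1}| = 1 / |r_j|`.
For `|y| > 1` both `[y]_{-1,1}` and `y - [y]_{-1,1}` have the sign of `y`, so `x_{j+1} = -1 / r_j`
has the sign opposite to `x_j`, and so do the partial quotients.
-/

/-- The generalized integer part `[x]_{a,b}`. -/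
noncomputable def gip (a b x : ℝ) : ℤ :=
  if x < a then ⌊x - a⌋ else if x < b then 0 else ⌊x - b⌋ + 1

/-- The orbit `x_0 = x`, `x_j = -1/(x_{j-1} - [x_{j-1}]_{a,b})` of the
`(a,b)`-continued fraction algorithm. -/
noncomputable def cfOrbit (a b x : ℝ) : ℕ → ℝ
  | 0 => x
  | j + 1 => -1 / (cfOrbit a b x j - (gip a b (cfOrbit a b x j) : ℝ))

section Gip

variable {a b y : ℝ}

lemma gip_of_lt (h : y < a) : gip a b y = ⌊y - a⌋ := if_pos h

lemma gip_of_mem_Ico (ha : a ≤ y) (hb : y < b) : gip a b y = 0 := by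
  rw [gip, if_neg (not_lt.2 ha), if_pos hb]

lemma gip_of_le (hab : a ≤ b) (h : b ≤ y) : gip a b y = ⌊y - b⌋ + 1 := by
  rw [gip, if_neg (by linarith), if_neg (not_lt.2 h)]

lemma sub_gip_of_lt (h : y < a) : y - gip a b y = Int.fract (y - a) + a := by
  rw [gip_of_lt h, Int.fract]
  ring

lemma sub_gip_of_le (hab : a ≤ b) (h : b ≤ y) :
    y - gip a b y = Int.fract (y - b) + (b - 1) := by
  rw [gip_of_le hab h, Int.fract]
  push_cast
  ring

lemma sub_gip_mem_Ico (hab : a + 1 ≤ b) (y : ℝ) : y - gip a b y ∈ Set.Ico a b := by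
  rcases lt_or_ge y a with hya | hay
  · rw [sub_gip_of_lt hya]
    exact ⟨by linarith [Int.fract_nonneg (y - a)], by linarith [Int.fract_lt_one (y - a)]⟩
  rcases lt_or_ge y b with hyb | hby
  · rw [gip_of_mem_Ico hay hyb, Int.cast_zero, sub_zero]
    exact ⟨hay, hyb⟩
  · rw [sub_gip_of_le (by linarith) hby]
    exact ⟨by linarith [Int.fract_nonneg (y - b)], by linarith [Int.fract_lt_one (y - b)]⟩

lemma mul_gip_pos (hy : 1 < |y|) : 0 < (gip (-1) 1 y : ℝ) * y := by
  rcases lt_abs.1 hy with hy | hy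
  · have : (0 : ℝ) ≤ ⌊y - 1⌋ := mod_cast Int.floor_nonneg.2 (by linarith)
    rw [gip_of_le (by norm_num) hy.le]
    push_cast
    positivity
  · have hfloor : ⌊y - -1⌋ < 0 := Int.floor_lt_zero.2 (by linarith)
    have : (⌊y - -1⌋ : ℝ) < 0 := mod_cast hfloor
    rw [gip_of_lt (by linarith)]
    nlinarith

lemma mul_sub_gip_pos (hirr : Irrational y) (hy : 1 < |y|) : 0 < y * (y - gip (-1) 1 y) := by
  have hr : y - gip (-1) 1 y ≠ 0 := (hirr.sub_intCast _).ne_zero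
  rcases lt_abs.1 hy with hy | hy
  · have : 0 ≤ y - gip (-1) 1 y := by
      rw [sub_gip_of_le (by norm_num) hy.le]
      linarith [Int.fract_nonneg (y - 1)]
    exact mul_pos (by linarith) (lt_of_le_of_ne this hr.symm)
  · have : y - gip (-1) 1 y < 0 := by
      rw [sub_gip_of_lt (by linarith)]
      linarith [Int.fract_lt_one (y - -1)]
    nlinarith

lemma gip_mul_gip_neg {z : ℝ} (hy : 1 < |y|) (hz : 1 < |z|) (hyz : y * z < 0) :
    gip (-1) 1 y * gip (-1) 1 z < 0 := by
  have hprod : 0 < ((gip (-1) 1 y * gip (-1) 1 z : ℤ) : ℝ) * (y * z) := by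
    calc (0 : ℝ) < (gip (-1) 1 y * y) * (gip (-1) 1 z * z) :=
          mul_pos (mul_gip_pos hy) (mul_gip_pos hz)
      _ = _ := by push_cast; ring
  exact_mod_cast neg_of_mul_pos_left hprod hyz.le

end Gip

section Orbit

variable {a b x : ℝ}

lemma cfOrbit_succ (j : ℕ) :
    cfOrbit a b x (j + 1) = -1 / (cfOrbit a b x j - gip a b (cfOrbit a b x j)) := rfl

lemma irrational_cfOrbit (hx : Irrational x) (j : ℕ) : Irrational (cfOrbit a b x j) := by
  induction j with
  | zero => exact hx
  | succ j ih =>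
    rw [cfOrbit_succ, neg_div, one_div]
    exact (ih.sub_intCast _).inv.neg

lemma one_lt_abs_cfOrbit_succ (ha : -1 ≤ a) (hab : a + 1 ≤ b) (hb : b ≤ 1)
    (hx : Irrational x) (j : ℕ) : 1 < |cfOrbit a b x (j + 1)| := by
  set r := cfOrbit a b x j - gip a b (cfOrbit a b x j)
  have hr : Irrational r := (irrational_cfOrbit hx j).sub_intCast _
  obtain ⟨hra, hrb⟩ := sub_gip_mem_Ico hab (cfOrbit a b x j)
  have hr_gt : -1 < r := lt_of_le_of_ne (ha.trans hra) (by simpa using (hr.ne_int (-1)).symm)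
  rw [cfOrbit_succ, abs_div, abs_neg, abs_one, one_lt_div (abs_pos.2 hr.ne_zero)]
  exact abs_lt.2 ⟨hr_gt, by linarith⟩

lemma cfOrbit_mul_cfOrbit_succ_neg (hx : Irrational x) {j : ℕ} (hj : 1 < |cfOrbit (-1) 1 x j|) :
    cfOrbit (-1) 1 x j * cfOrbit (-1) 1 x (j + 1) < 0 := by
  have hpos := mul_sub_gip_pos (irrational_cfOrbit hx j) hj
  rw [cfOrbit_succ, mul_div, mul_neg_one, neg_div, neg_neg_iff_pos]
  exact div_pos_iff.2 (mul_pos_iff.1 hpos)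

end Orbit

/-- For the `(-1,1)`-continued fraction algorithm applied to an
irrational `x`, the partial quotients `a_j = [x_j]_{-1,1}` alternate in sign for
`j ≥ 1`: `a_j` and `a_{j+1}` have opposite signs. -/
theorem stmt5 (x : ℝ) (hx : Irrational x) :
    ∀ j ≥ 1, gip (-1) 1 (cfOrbit (-1) 1 x j) * gip (-1) 1 (cfOrbit (-1) 1 x (j + 1)) < 0 := by
  intro j hj
  obtain ⟨i, rfl⟩ := Nat.exists_eq_add_of_le' hj
  have h₁ := one_lt_abs_cfOrbit_succ le_rfl (by norm_num) le_rfl hx i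
  have h₂ := one_lt_abs_cfOrbit_succ le_rfl (by norm_num) le_rfl hx (i + 1)
  exact gip_mul_gip_neg h₁ h₂ (cfOrbit_mul_cfOrbit_succ_neg hx h₁)
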